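/- Let Y, θ, ε > 0 and S ≥ 1 be reals, set K := Y·θ·S/ε and x := √(ln(K + 1)), and define erf(x) := (2/√π)·∫₀^x e^{−t²} dt. Then for every real M with M ≥ (S/π)·(2·ln(K + 1) + ln S + ln(2/π)), the total error E := Y·θ·(S/2)·( (1 − erf(x))/erf(x) + (2S/π)·(1/erf(x))·exp(x²)·exp(−π·M/S) ) satisfies E ≤ ε. In particular M = O(S·ln S) suffices (for fixed Y, θ, ε) to achieve error at most ε. -/

import Mathlib

/-- The error function `erf(x) = (2/√π)·∫₀^x e^{-u²} du`. -/
noncomputable def erf (x : ℝ) : ℝ := (2 / Real.sqrt Real.pi) * ∫ u in (0:ℝ)..x, Real.exp (-u ^ 2)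

/-!
Since `x² = ln(K+1)`, the Gaussian tail bound `1 - erf x ≤ e^{-x²}` gives `erf x ≥ K/(K+1)`, so the
area term is at most `1/((K+1)·erf x)`. The hypothesis on `M` says exactly
`e^{-πM/S} ≤ π/(2S(K+1)²)`, which bounds the Fourier term by the same quantity.
Hence `E ≤ YθS/((K+1)·erf x) = εK/((K+1)·erf x) ≤ ε`.
-/

open Real MeasureTheory Set

theorem setIntegral_Ioi_eq_setIntegral_Ioi_zero_comp_add_right (f : ℝ → ℝ) (a : ℝ) :
    ∫ t in Ioi a, f t = ∫ s in Ioi 0, f (s + a) := by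
  have hpre : (· + a) ⁻¹' Ioi a = Ioi 0 := by ext s; simp
  have hemb : MeasurableEmbedding (· + a : ℝ → ℝ) := (MeasurableEquiv.addRight a).measurableEmbedding
  rw [← hpre, ← hemb.setIntegral_map, (measurePreserving_add_right volume a).map_eq]

theorem integrable_exp_neg_sq : Integrable fun t : ℝ => exp (-t ^ 2) := by
  simpa using integrable_exp_neg_mul_sq one_pos

/-- Since `t² ≥ a² + (t - a)²` for `t ≥ a ≥ 0`, the tail is dominated by a shifted half-Gaussian. -/
theorem integral_Ioi_exp_neg_sq_le {a : ℝ} (ha : 0 ≤ a) :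
    ∫ t in Ioi a, exp (-t ^ 2) ≤ exp (-a ^ 2) * (√π / 2) := by
  rw [setIntegral_Ioi_eq_setIntegral_Ioi_zero_comp_add_right]
  calc ∫ s in Ioi 0, exp (-(s + a) ^ 2)
      ≤ ∫ s in Ioi 0, exp (-a ^ 2) * exp (-s ^ 2) := by
        refine setIntegral_mono_on (integrable_exp_neg_sq.comp_add_right a).integrableOn
          (integrable_exp_neg_sq.const_mul _).integrableOn measurableSet_Ioi fun s hs => ?_
        rw [← exp_add, exp_le_exp]
        nlinarith [mul_nonneg (le_of_lt (mem_Ioi.mp hs)) ha]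
    _ = exp (-a ^ 2) * (√π / 2) := by
        rw [integral_const_mul]
        simpa using integral_gaussian_Ioi 1

theorem erf_eq_one_sub_integral_Ioi {x : ℝ} (hx : 0 ≤ x) :
    erf x = 1 - 2 / √π * ∫ t in Ioi x, exp (-t ^ 2) := by
  have hsplit : (∫ t in Ioc 0 x, exp (-t ^ 2)) + ∫ t in Ioi x, exp (-t ^ 2) = √π / 2 := by
    rw [← setIntegral_union (Ioc_disjoint_Ioi le_rfl) measurableSet_Ioi
      integrable_exp_neg_sq.integrableOn integrable_exp_neg_sq.integrableOn,
      Ioc_union_Ioi_eq_Ioi hx]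
    simpa using integral_gaussian_Ioi 1
  have hπ : 0 < √π := sqrt_pos.2 pi_pos
  rw [erf, intervalIntegral.integral_of_le hx, eq_sub_of_add_eq hsplit]
  field_simp

theorem one_sub_exp_neg_sq_le_erf {x : ℝ} (hx : 0 ≤ x) : 1 - exp (-x ^ 2) ≤ erf x := by
  have hπ : 0 < √π := sqrt_pos.2 pi_pos
  have htail := mul_le_mul_of_nonneg_left (integral_Ioi_exp_neg_sq_le hx)
    (by positivity : (0 : ℝ) ≤ 2 / √π)
  rw [erf_eq_one_sub_integral_Ioi hx]
  field_simp at htail ⊢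
  linarith

theorem div_add_one_le_erf_sqrt_log {K : ℝ} (hK : 0 ≤ K) : K / (K + 1) ≤ erf √(log (K + 1)) := by
  have h := one_sub_exp_neg_sq_le_erf (sqrt_nonneg (log (K + 1)))
  rw [sq_sqrt (log_nonneg (by linarith)), exp_neg, exp_log (by linarith)] at h
  field_simp at h ⊢
  linarith

/-- The hypothesis reads `ln(2SA²/π) ≤ πM/S`. -/
theorem exp_neg_pi_mul_div_le {S A M : ℝ} (hS : 0 < S) (hA : 0 < A)
    (hM : S / π * (2 * log A + log S + log (2 / π)) ≤ M) :
    exp (-π * M / S) ≤ π / (2 * S * A ^ 2) := by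
  have hlog : log (2 * S * A ^ 2 / π) ≤ π * M / S := by
    rw [log_div (by positivity) pi_ne_zero, log_mul (by positivity) (by positivity),
      log_mul two_ne_zero hS.ne', log_pow, le_div_iff₀ hS]
    rw [log_div two_ne_zero pi_ne_zero, div_mul_eq_mul_div, div_le_iff₀ pi_pos] at hM
    push_cast
    linarith
  calc exp (-π * M / S) = exp (-(π * M / S)) := by ring_nf
    _ ≤ exp (-log (2 * S * A ^ 2 / π)) := exp_le_exp.2 (neg_le_neg hlog)
    _ = π / (2 * S * A ^ 2) := by
        rw [exp_neg, exp_log (by positivity), inv_div]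

/-- **final lemma of the paper.** With `K = YθS/ε` and `x = √(ln(K+1))`, for every
`M ≥ (S/π)·(2·ln(K+1) + ln S + ln(2/π))` the total error
`E = Yθ(S/2)·((1 − erf x)/erf x + (2S/π)·(1/erf x)·e^{x²}·e^{-πM/S})` is at most `ε`.
In particular `M = O(S·ln S)` suffices to achieve error at most `ε`. -/
theorem total_error_small (Y θ ε S : ℝ) (hY : 0 < Y) (hθ : 0 < θ) (hε : 0 < ε)
    (hS : 1 ≤ S) (K x : ℝ) (hK : K = Y * θ * S / ε) (hx : x = Real.sqrt (Real.log (K + 1)))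
    (M : ℝ) (hM : (S / Real.pi) * (2 * Real.log (K + 1) + Real.log S + Real.log (2 / Real.pi)) ≤ M) :
    Y * θ * (S / 2) * ((1 - erf x) / erf x +
        (2 * S / Real.pi) * (1 / erf x) * Real.exp (x ^ 2) * Real.exp (-Real.pi * M / S))
      ≤ ε := by
  have hSpos : 0 < S := one_pos.trans_le hS
  have hKpos : 0 < K := by rw [hK]; positivity
  have hK1 : 0 < K + 1 := by linarith
  have hexp : exp (x ^ 2) = K + 1 := by rw [hx, sq_sqrt (log_nonneg (by linarith)), exp_log hK1]
  have herf : K / (K + 1) ≤ erf x := hx ▸ div_add_one_le_erf_sqrt_log hKpos.le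
  have he : 0 < erf x := (div_pos hKpos hK1).trans_le herf
  have harea : (1 - erf x) / erf x ≤ 1 / ((K + 1) * erf x) := by
    rw [div_le_div_iff₀ he (by positivity)]
    field_simp at herf
    nlinarith
  have hfourier : 2 * S / π * (1 / erf x) * exp (x ^ 2) * exp (-π * M / S)
      ≤ 1 / ((K + 1) * erf x) :=
    calc 2 * S / π * (1 / erf x) * exp (x ^ 2) * exp (-π * M / S)
        ≤ 2 * S / π * (1 / erf x) * (K + 1) * (π / (2 * S * (K + 1) ^ 2)) := by
          rw [hexp]
          gcongr
          exact exp_neg_pi_mul_div_le hSpos hK1 hM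
      _ = 1 / ((K + 1) * erf x) := by field_simp
  have hYθS : Y * θ * S = ε * K := by rw [hK]; field_simp
  calc Y * θ * (S / 2) * ((1 - erf x) / erf x +
        2 * S / π * (1 / erf x) * exp (x ^ 2) * exp (-π * M / S))
      ≤ Y * θ * (S / 2) * (2 * (1 / ((K + 1) * erf x))) := by gcongr; linarith
    _ = ε * (K / (K + 1) / erf x) := by rw [← mul_div_assoc, hYθS]; field_simp
    _ ≤ ε := mul_le_of_le_one_right hε.le ((div_le_one he).2 herf)
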